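/- arXiv:1603.09545 — 11 statements merged into one kernel-verified Lean document; each statement's English description precedes it below -/
import Mathlib

section
/- For every SETAF S over A, the admissible interpretations of S coincide with the admissible interpretations of its corresponding ADF: adm(S) = adm(D_S). -/
open Classical

/-- Three-valued interpretations over `A`:
`none` is **u**, `some true` is **t**, `some false` is **f**. -/
abbrev Interp (A : Type*) := A → Option Bool

/-- Two-valued interpretations over `A`. -/
abbrev Interp2 (A : Type*) := A → Bool

variable {A : Type*}

/-- The information order `≤ᵢ`, lifted pointwise to interpretations. -/
def leI (v w : Interp A) : Prop := ∀ a, v a = none ∨ v a = w a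

/-- The strict information order `<ᵢ`. -/
def ltI (v w : Interp A) : Prop := leI v w ∧ v ≠ w

/-- `w ∈ [v]₂`: the two-valued interpretation `w` extends `v`. -/
def ext2 (v : Interp A) (w : Interp2 A) : Prop := ∀ a, v a = none ∨ v a = some (w a)

/-- View a two-valued interpretation as a three-valued one. -/
def toI (w : Interp2 A) : Interp A := fun a => some (w a)

/-- `v` is two-valued. -/
def twoValued (v : Interp A) : Prop := ∀ a, v a ≠ none

/-- The operator `Γ_D` of the ADF with acceptance conditions `C`:
it maps `a` to the consensus `⊓ᵢ { C_a(w) | w ∈ [v]₂ }`. -/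
noncomputable def Gamma (C : A → Interp2 A → Bool) (v : Interp A) : Interp A :=
  fun a =>
    if ∀ w, ext2 v w → C a w = true then some true
    else if ∀ w, ext2 v w → C a w = false then some false
    else none

/-- `v` is admissible for the ADF `C`: `v ≤ᵢ Γ(v)`. -/
def admissible (C : A → Interp2 A → Bool) (v : Interp A) : Prop := leI v (Gamma C v)

/-- `v` is complete for the ADF `C`: `Γ(v) = v`. -/
def complete (C : A → Interp2 A → Bool) (v : Interp A) : Prop := Gamma C v = v

/-- `v` is preferred for the ADF `C`: `≤ᵢ`-maximal admissible. -/
def preferred (C : A → Interp2 A → Bool) (v : Interp A) : Prop :=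
  admissible C v ∧ ¬ ∃ w, admissible C w ∧ ltI v w

/-- `v` is a two-valued model of the ADF `C`. -/
def isModel (C : A → Interp2 A → Bool) (v : Interp A) : Prop :=
  twoValued v ∧ Gamma C v = v

/-- The `≤ᵢ`-maximal elements of a set of interpretations. -/
def maximals (W : Set (Interp A)) : Set (Interp A) :=
  {v ∈ W | ¬ ∃ w ∈ W, ltI v w}

/- SETAFs. A SETAF over `A` is a set `X` of pairs `(B, a)` of a (nonempty) set of
attackers `B ⊆ A` and an attacked statement `a ∈ A`. -/

/-- `a` is acceptable wrt `v` in the SETAF `X`. -/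
def acceptable (X : Set (Set A × A)) (v : Interp A) (a : A) : Prop :=
  ∀ B, (B, a) ∈ X → ∃ b ∈ B, v b = some false

/-- `a` is unacceptable wrt `v` in the SETAF `X`. -/
def unacceptable (X : Set (Set A × A)) (v : Interp A) (a : A) : Prop :=
  ∃ B, (B, a) ∈ X ∧ ∀ b ∈ B, v b = some true

/-- `v` is admissible for the SETAF `X`. -/
def admS (X : Set (Set A × A)) (v : Interp A) : Prop :=
  ∀ a, (v a = some true → acceptable X v a) ∧ (v a = some false → unacceptable X v a)

/-- `v` is complete for the SETAF `X`. -/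
def comS (X : Set (Set A × A)) (v : Interp A) : Prop :=
  ∀ a, (v a = some true ↔ acceptable X v a) ∧ (v a = some false ↔ unacceptable X v a)

/-- `v` is preferred for the SETAF `X`: `≤ᵢ`-maximal admissible. -/
def prfS (X : Set (Set A × A)) (v : Interp A) : Prop :=
  admS X v ∧ ¬ ∃ w, admS X w ∧ ltI v w

/-- `v` is a two-valued model of the SETAF `X`. -/
def modS (X : Set (Set A × A)) (v : Interp A) : Prop :=
  admS X v ∧ twoValued v

/-- The ADF `D_S` corresponding to the SETAF `X`:
`C_a(w) = t` iff every attack `(B, a) ∈ X` has some `b ∈ B` with `w(b) = f`. -/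
noncomputable def setafADF (X : Set (Set A × A)) : A → Interp2 A → Bool :=
  fun a w => if ∀ B, (B, a) ∈ X → ∃ b ∈ B, w b = false then true else false

/-- The ADF `D_(A,R)` associated to the AF with attack relation `R`. -/
noncomputable def afADF (R : Set (A × A)) : A → Interp2 A → Bool :=
  fun a w => if ∀ b, (b, a) ∈ R → w b = false then true else false

/-- `f` is an adm-characterization of `V`. -/
def admChar (f : Interp2 A → Interp2 A) (V : Set (Interp A)) : Prop :=
  ∀ v : Interp A, v ∈ V ↔ ∀ a, v a ≠ none → ∀ w, ext2 v w → some (f w a) = v a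

/-- `f` is a com-characterization of `V`. -/
def comChar (f : Interp2 A → Interp2 A) (V : Set (Interp A)) : Prop :=
  ∀ v : Interp A, v ∈ V ↔
    ((∀ a, v a ≠ none → ∀ w, ext2 v w → some (f w a) = v a) ∧
     (∀ a, v a = none →
        (∃ w, ext2 v w ∧ f w a = true) ∧ (∃ w, ext2 v w ∧ f w a = false)))

/-- `f` is a mod-characterization of `V`. -/
def modChar (f : Interp2 A → Interp2 A) (V : Set (Interp A)) : Prop :=
  (∀ v ∈ V, twoValued v) ∧ ∀ w : Interp2 A, (toI w ∈ V ↔ f w = w)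

/-- The function `f_D` of the ADF `D` with acceptance conditions `C`. -/
def charOf (C : A → Interp2 A → Bool) : Interp2 A → Interp2 A := fun w a => C a w

/-- The ADF `D_f` built from `f : V₂ → V₂`: `C_a(w) = t` iff `f(w)(a) = t`. -/
def adfOf (f : Interp2 A → Interp2 A) : A → Interp2 A → Bool := fun a w => f w a

/-- `b` is supporting for `a` in the ADF `C`. -/
def supporting [DecidableEq A] (C : A → Interp2 A → Bool) (b a : A) : Prop :=
  ∀ w : Interp2 A, w b = false → C a w = true → C a (Function.update w b true) = true

/-- `b` is attacking for `a` in the ADF `C`. -/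
def attacking [DecidableEq A] (C : A → Interp2 A → Bool) (b a : A) : Prop :=
  ∀ w : Interp2 A, w b = false → C a (Function.update w b true) = true → C a w = true

/-- The ADF `C` is bipolar. -/
def bipolar [DecidableEq A] (C : A → Interp2 A → Bool) : Prop :=
  ∀ a b, supporting C b a ∨ attacking C b a

/-- For every SETAF `S` over `A`, `adm(S) = adm(D_S)`. -/
theorem setaf_adm_eq_adf (A : Type*) [Fintype A]
    (X : Set (Set A × A)) (hX : ∀ p ∈ X, p.1.Nonempty) :
    {v : Interp A | admS X v} = {v : Interp A | admissible (setafADF X) v} := by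
  ext v
  simp only [Set.mem_setOf_eq]
  constructor
  · intro h a
    rcases hv : v a with _ | b
    · left; rfl
    · right
      symm
      cases b
      · -- v a = some false
        obtain ⟨B, hB, hall⟩ := (h a).2 hv
        have hcf : ∀ w : Interp2 A, ext2 v w → setafADF X a w = false := by
          intro w hw
          have hnF : ¬ ∀ B, (B, a) ∈ X → ∃ b ∈ B, w b = false := by
            intro hF
            obtain ⟨b, hbB, hwb⟩ := hF B hB
            rcases hw b with h1 | h1
            · rw [hall b hbB] at h1; exact absurd h1 (by simp)
            · rw [hall b hbB, hwb] at h1; exact absurd h1 (by simp)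
          simp [setafADF, hnF]
        have hex : ext2 v (fun b => (v b).getD true) := by
          intro b
          rcases hvb : v b with _ | c
          · left; rfl
          · right; simp [hvb]
        have hnt : ¬ ∀ w : Interp2 A, ext2 v w → setafADF X a w = true := by
          intro hall'
          have h1 := hall' _ hex
          rw [hcf _ hex] at h1
          exact absurd h1 (by simp)
        simp only [Gamma]
        rw [if_neg hnt, if_pos hcf]
      · -- v a = some true
        have hct : ∀ w : Interp2 A, ext2 v w → setafADF X a w = true := by
          intro w hw
          have hF : ∀ B, (B, a) ∈ X → ∃ b ∈ B, w b = false := by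
            intro B hB
            obtain ⟨b, hbB, hvb⟩ := (h a).1 hv B hB
            refine ⟨b, hbB, ?_⟩
            rcases hw b with h1 | h1
            · rw [hvb] at h1; exact absurd h1 (by simp)
            · rw [hvb] at h1; exact Option.some.inj h1.symm
          simp only [setafADF]
          rw [if_pos hF]
        simp only [Gamma]
        rw [if_pos hct]
  · intro h a
    constructor
    · intro hvt
      have hG : Gamma (setafADF X) v a = some true := by
        rcases h a with h1 | h1
        · rw [hvt] at h1; exact absurd h1 (by simp)
        · rw [← h1, hvt]
      have hct : ∀ w : Interp2 A, ext2 v w → setafADF X a w = true := by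
        by_contra hc
        simp only [Gamma] at hG
        rw [if_neg hc] at hG
        by_cases h2 : ∀ w : Interp2 A, ext2 v w → setafADF X a w = false
        · rw [if_pos h2] at hG; exact absurd hG (by simp)
        · rw [if_neg h2] at hG; exact absurd hG (by simp)
      intro B hB
      by_contra hno
      push_neg at hno
      have hex : ext2 v (fun b => if v b = some false then false else true) := by
        intro b
        rcases hvb : v b with _ | c
        · left; rfl
        · right
          cases c
          · simp [hvb]
          · simp [hvb]
      have hw := hct _ hex
      simp only [setafADF] at hw
      by_cases hF : ∀ B, (B, a) ∈ X → ∃ b ∈ B, (if v b = some false then false else true) = false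
      · obtain ⟨b, hbB, hwb⟩ := hF B hB
        have hvb : v b = some false := by
          by_contra hne
          simp [hne] at hwb
        exact hno b hbB hvb
      · rw [if_neg hF] at hw; exact absurd hw (by simp)
    · intro hvf
      have hG : Gamma (setafADF X) v a = some false := by
        rcases h a with h1 | h1
        · rw [hvf] at h1; exact absurd h1 (by simp)
        · rw [← h1, hvf]
      have hcf : ∀ w : Interp2 A, ext2 v w → setafADF X a w = false := by
        simp only [Gamma] at hG
        by_cases h1 : ∀ w : Interp2 A, ext2 v w → setafADF X a w = true
        · rw [if_pos h1] at hG; exact absurd hG (by simp)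
        · rw [if_neg h1] at hG
          by_cases h2 : ∀ w : Interp2 A, ext2 v w → setafADF X a w = false
          · exact h2
          · rw [if_neg h2] at hG; exact absurd hG (by simp)
      by_contra hno
      simp only [unacceptable, not_exists, not_and] at hno
      have hex : ext2 v (fun b => if v b = some true then true else false) := by
        intro b
        rcases hvb : v b with _ | c
        · left; rfl
        · right
          cases c
          · simp [hvb]
          · simp [hvb]
      have hfw := hcf _ hex
      simp only [setafADF] at hfw
      by_cases hF : ∀ B, (B, a) ∈ X → ∃ b ∈ B, (if v b = some true then true else false) = false
      · rw [if_pos hF] at hfw; exact absurd hfw (by simp)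
      · push_neg at hF
        obtain ⟨B, hB, hall⟩ := hF
        apply hno B hB
        intro b hbB
        have hwb := hall b hbB
        by_contra hne
        simp [hne] at hwb
end

section
/- For every SETAF S over A, the complete interpretations of S coincide with the complete interpretations of its corresponding ADF: com(S) = com(D_S). -/
open Classical

variable {A : Type*}

lemma ext2_exists (v : Interp A) : ∃ w : Interp2 A, ext2 v w := by
  refine ⟨fun a => (v a).getD true, fun a => ?_⟩
  cases h : v a with
  | none => exact Or.inl rfl
  | some b => exact Or.inr (by simp [h])

lemma not_both (C : A → Interp2 A → Bool) (v : Interp A) (a : A)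
    (hT : ∀ w, ext2 v w → C a w = true)
    (hF : ∀ w, ext2 v w → C a w = false) : False := by
  obtain ⟨w, hw⟩ := ext2_exists v
  have h1 := hT w hw
  rw [hF w hw] at h1
  exact absurd h1 (by simp)

lemma gamma_true (C : A → Interp2 A → Bool) (v : Interp A) (a : A) :
    Gamma C v a = some true ↔ (∀ w, ext2 v w → C a w = true) := by
  simp only [Gamma]
  split
  · next h => simpa using h
  · split <;> simp_all

lemma gamma_false (C : A → Interp2 A → Bool) (v : Interp A) (a : A) :
    Gamma C v a = some false ↔ (∀ w, ext2 v w → C a w = false) := by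
  simp only [Gamma]
  split
  · next h =>
    simp only [Option.some_inj]
    constructor
    · intro hc; exact absurd hc (by simp)
    · intro hF; exact absurd (not_both C v a h hF) id
  · split
    · next h => simpa using h
    · next h => simp_all

lemma condT_iff (X : Set (Set A × A)) (v : Interp A) (a : A) :
    (∀ w, ext2 v w → setafADF X a w = true) ↔ acceptable X v a := by
  constructor
  · intro h B hB
    set w1 : Interp2 A := fun b => !(decide (v b = some false)) with hw1
    have hext : ext2 v w1 := by
      intro b
      cases hb : v b with
      | none => exact Or.inl rfl
      | some c => cases c <;> simp [hw1, hb]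
    have h1 := h w1 hext
    have hP : ∀ B, (B, a) ∈ X → ∃ b ∈ B, w1 b = false := by
      by_contra hc
      simp only [setafADF, if_neg hc] at h1
      exact absurd h1 (by simp)
    rcases hP B hB with ⟨b, hbB, hb⟩
    exact ⟨b, hbB, by simpa [hw1] using hb⟩
  · intro h w hw
    have hP : ∀ B, (B, a) ∈ X → ∃ b ∈ B, w b = false := by
      intro B hB
      rcases h B hB with ⟨b, hbB, hb⟩
      refine ⟨b, hbB, ?_⟩
      rcases hw b with h1 | h1
      · rw [h1] at hb; exact absurd hb (by simp)
      · rw [h1] at hb; exact Option.some_inj.mp hb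
    simp only [setafADF, if_pos hP]

lemma condF_iff (X : Set (Set A × A)) (v : Interp A) (a : A) :
    (∀ w, ext2 v w → setafADF X a w = false) ↔ unacceptable X v a := by
  constructor
  · intro h
    set w0 : Interp2 A := fun b => decide (v b = some true) with hw0
    have hext : ext2 v w0 := by
      intro b
      cases hb : v b with
      | none => exact Or.inl rfl
      | some c => cases c <;> simp [hw0, hb]
    have h1 := h w0 hext
    have hnP : ¬ ∀ B, (B, a) ∈ X → ∃ b ∈ B, w0 b = false := by
      intro hP
      simp only [setafADF, if_pos hP] at h1
      exact absurd h1 (by simp)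
    push_neg at hnP
    rcases hnP with ⟨B, hB, hall⟩
    refine ⟨B, hB, fun b hb => ?_⟩
    have := hall b hb
    simpa [hw0] using this
  · rintro ⟨B, hB, hall⟩ w hw
    have hnP : ¬ ∀ B, (B, a) ∈ X → ∃ b ∈ B, w b = false := by
      intro hP
      rcases hP B hB with ⟨b, hbB, hb⟩
      have h1 := hall b hbB
      rcases hw b with h2 | h2
      · rw [h1] at h2; exact absurd h2 (by simp)
      · rw [h1] at h2
        rw [← Option.some_inj.mp h2] at hb
        exact absurd hb (by simp)
    simp only [setafADF, if_neg hnP]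

/-- For every SETAF `S` over `A`, `com(S) = com(D_S)`. -/
theorem setaf_com_eq_adf (A : Type*) [Fintype A]
    (X : Set (Set A × A)) (hX : ∀ p ∈ X, p.1.Nonempty) :
    {v : Interp A | comS X v} = {v : Interp A | complete (setafADF X) v} := by
  ext v
  simp only [Set.mem_setOf_eq]
  constructor
  · intro hv
    funext a
    rcases hv a with ⟨hT, hF⟩
    cases hva : v a with
    | none =>
      have hnT : ¬ ∀ w, ext2 v w → setafADF X a w = true := fun h => by
        have := hT.mpr ((condT_iff X v a).mp h); rw [hva] at this; simp at this
      have hnF : ¬ ∀ w, ext2 v w → setafADF X a w = false := fun h => by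
        have := hF.mpr ((condF_iff X v a).mp h); rw [hva] at this; simp at this
      simp only [Gamma, if_neg hnT, if_neg hnF, hva]
    | some b =>
      cases b with
      | true =>
        exact (gamma_true _ v a).mpr ((condT_iff X v a).mpr (hT.mp hva))
      | false =>
        exact (gamma_false _ v a).mpr ((condF_iff X v a).mpr (hF.mp hva))
  · intro hv a
    have hva := congrFun hv a
    constructor
    · rw [← condT_iff, ← gamma_true (setafADF X) v a, hva]
    · rw [← condF_iff, ← gamma_false (setafADF X) v a, hva]
end

section
/- For every SETAF S over A, the two-valued models of S coincide with the two-valued models of its corresponding ADF: mod(S) = mod(D_S). -/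
open Classical

variable {A : Type*}

lemma gamma_two' {A : Type*} (C : A → Interp2 A → Bool) (v : Interp A)
    (w0 : Interp2 A) (hv : ∀ a, v a = some (w0 a)) :
    Gamma C v = fun a => some (C a w0) := by
  have hext : ∀ w, ext2 v w → w = w0 := by
    intro w hw
    funext a
    rcases hw a with h | h
    · rw [hv a] at h; exact absurd h (by simp)
    · have := (hv a).symm.trans h
      exact (Option.some_injective _ this).symm
  have hw0 : ext2 v w0 := fun a => Or.inr (hv a)
  funext a
  unfold Gamma
  by_cases h : C a w0 = true
  · rw [if_pos]
    · exact (h ▸ rfl)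
    · intro w hw; rw [hext w hw]; exact h
  · have hf : C a w0 = false := by revert h; cases C a w0 <;> simp
    rw [if_neg, if_pos]
    · exact (hf ▸ rfl)
    · intro w hw; rw [hext w hw]; exact hf
    · intro hall; exact h (hall w0 hw0)

/-- For every SETAF `S` over `A`, `mod(S) = mod(D_S)`. -/
theorem setaf_mod_eq_adf (A : Type*) [Fintype A]
    (X : Set (Set A × A)) (hX : ∀ p ∈ X, p.1.Nonempty) :
    {v : Interp A | modS X v} = {v : Interp A | isModel (setafADF X) v} := by
  ext v
  simp only [Set.mem_setOf_eq, modS, isModel]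
  constructor
  · rintro ⟨hadm, htv⟩
    refine ⟨htv, ?_⟩
    set w0 : Interp2 A := fun a => (v a).getD true with hw0def
    have hv : ∀ a, v a = some (w0 a) := by
      intro a
      rcases hva : v a with _ | b
      · exact absurd hva (htv a)
      · simp [hw0def, hva]
    rw [gamma_two' _ v w0 hv]
    funext a
    rw [hv a]
    congr 1
    rcases hwa : w0 a with _ | _
    · -- w0 a = false: v a = some false, unacceptable
      have hva : v a = some false := by rw [hv a, hwa]
      obtain ⟨B, hB, hall⟩ := (hadm a).2 hva
      have : ¬ (∀ B', (B', a) ∈ X → ∃ b ∈ B', w0 b = false) := by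
        intro h
        obtain ⟨b, hb, hbf⟩ := h B hB
        have := hall b hb
        rw [hv b, hbf] at this
        simp at this
      simp [setafADF, this]
    · -- w0 a = true: acceptable
      have hva : v a = some true := by rw [hv a, hwa]
      have hacc := (hadm a).1 hva
      have : ∀ B', (B', a) ∈ X → ∃ b ∈ B', w0 b = false := by
        intro B' hB'
        obtain ⟨b, hb, hbf⟩ := hacc B' hB'
        refine ⟨b, hb, ?_⟩
        have := (hv b).symm.trans hbf
        exact Option.some_injective _ this
      simp only [setafADF, if_pos this]
  · rintro ⟨htv, hG⟩
    refine ⟨?_, htv⟩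
    set w0 : Interp2 A := fun a => (v a).getD true with hw0def
    have hv : ∀ a, v a = some (w0 a) := by
      intro a
      rcases hva : v a with _ | b
      · exact absurd hva (htv a)
      · simp [hw0def, hva]
    rw [gamma_two' _ v w0 hv] at hG
    have hC : ∀ a, setafADF X a w0 = w0 a := by
      intro a
      have := congrFun hG a
      rw [hv a] at this
      exact Option.some_injective _ this
    intro a
    constructor
    · intro hva
      have hwa : w0 a = true := by
        have := (hv a).symm.trans hva
        exact Option.some_injective _ this
      have h : ∀ B, (B, a) ∈ X → ∃ b ∈ B, w0 b = false := by
        by_contra h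
        have := (hC a).trans hwa
        simp [setafADF, h] at this
      intro B hB
      obtain ⟨b, hb, hbf⟩ := h B hB
      exact ⟨b, hb, by rw [hv b, hbf]⟩
    · intro hva
      have hwa : w0 a = false := by
        have := (hv a).symm.trans hva
        exact Option.some_injective _ this
      have h : ¬ ∀ B, (B, a) ∈ X → ∃ b ∈ B, w0 b = false := by
        intro h
        have := (hC a).trans hwa
        simp only [setafADF, if_pos h] at this
        exact Bool.noConfusion this
      push_neg at h
      obtain ⟨B, hB, hall⟩ := h
      refine ⟨B, hB, fun b hb => ?_⟩
      have hbb := hall b hb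
      rw [hv b]
      cases hwb : w0 b
      · exact absurd hwb hbb
      · rfl
end

section
/- For every ADF D over A, the function f_D : V₂ → V₂ defined by f_D(w)(a) = C_a(w) for every two-valued interpretation w and every a ∈ A is an adm-characterization of adm(D). -/
open Classical

variable {A : Type*}

/-- For every ADF `D` over `A`, the function `f_D(w)(a) = C_a(w)`
is an adm-characterization of `adm(D)`. -/
theorem fD_is_admChar (A : Type*) [Fintype A] (C : A → Interp2 A → Bool) :
    admChar (charOf C) {v : Interp A | admissible C v} := by
  intro v
  constructor
  · intro hv a ha w hw
    rcases hv a with h | h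
    · exact absurd h ha
    · unfold Gamma at h
      split_ifs at h with h1 h2
      · rw [h, charOf, h1 w hw]
      · rw [h, charOf, h2 w hw]
      · exact absurd h ha
  · intro h a
    cases hva : v a with
    | none => left; rfl
    | some b =>
      right
      have key : ∀ w, ext2 v w → C a w = b := by
        intro w hw
        have := h a (by rw [hva]; simp) w hw
        rw [hva] at this; exact Option.some_injective _ this
      unfold Gamma
      cases b with
      | true => rw [if_pos key]
      | false =>
        rw [if_neg, if_pos key]
        intro hall
        classical
        have hex : ∃ w : Interp2 A, ext2 v w := by
          refine ⟨fun a => (v a).getD true, fun a => ?_⟩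
          cases h : v a <;> simp [h]
        obtain ⟨w, hw⟩ := hex
        have := hall w hw; rw [key w hw] at this; exact Bool.false_ne_true this
end

section
/- If f : V₂ → V₂ is an adm-characterization of a set V of interpretations over A, then the ADF D_f satisfies adm(D_f) = V. -/
open Classical

variable {A : Type*}

/-- If `f : V₂ → V₂` is an adm-characterization of `V`,
then `adm(D_f) = V`. -/
theorem admChar_realizes (A : Type*) [Fintype A]
    (f : Interp2 A → Interp2 A) (V : Set (Interp A)) (hf : admChar f V) :
    {v : Interp A | admissible (adfOf f) v} = V := by
  ext v
  simp only [Set.mem_setOf_eq]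
  rw [hf v]
  constructor
  · intro hadm a ha w hw
    have h := hadm a
    rcases h with h | h
    · exact absurd h ha
    · unfold Gamma adfOf at h
      by_cases h1 : ∀ w', ext2 v w' → f w' a = true
      · rw [if_pos h1] at h
        rw [h1 w hw, h]
      · rw [if_neg h1] at h
        by_cases h2 : ∀ w', ext2 v w' → f w' a = false
        · rw [if_pos h2] at h
          rw [h2 w hw, h]
        · rw [if_neg h2] at h
          exact absurd h ha
  · intro hc a
    by_cases ha : v a = none
    · exact Or.inl ha
    · right
      unfold Gamma adfOf
      rcases Option.ne_none_iff_exists'.mp ha with ⟨b, hb⟩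
      cases b with
      | true =>
        rw [if_pos]
        · exact hb
        · intro w hw
          have := hc a ha w hw
          rw [hb] at this
          exact (Option.some_inj.mp this)
      | false =>
        have hext : ∃ w : Interp2 A, ext2 v w := by
          refine ⟨fun a => (v a).getD true, fun a => ?_⟩
          cases h : v a with
          | none => exact Or.inl rfl
          | some b => right; simp [h]
        rcases hext with ⟨w0, hw0⟩
        have hall : ∀ w, ext2 v w → f w a = false := by
          intro w hw
          have := hc a ha w hw
          rw [hb] at this
          exact (Option.some_inj.mp this)
        rw [if_neg, if_pos hall]
        · exact hb
        · intro h
          have := (h w0 hw0).symm.trans (hall w0 hw0)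
          simp at this
end

section
/- For every ADF D over A, the function f_D : V₂ → V₂ defined by f_D(w)(a) = C_a(w) for every two-valued interpretation w and every a ∈ A is a com-characterization of com(D). -/
open Classical

variable {A : Type*}

/-- For every ADF `D` over `A`, the function `f_D(w)(a) = C_a(w)`
is a com-characterization of `com(D)`. -/
theorem fD_is_comChar (A : Type*) [Fintype A] (C : A → Interp2 A → Bool) :
    comChar (charOf C) {v : Interp A | complete C v} := by
  intro v
  have hext : ext2 v (fun a => (v a).getD true) := by
    intro a; cases h : v a with
    | none => exact Or.inl rfl
    | some b => right; simp [h]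
  constructor
  · intro hv
    have hv' : ∀ a, Gamma C v a = v a := fun a => congrFun hv a
    constructor
    · intro a ha w hw
      have h := hv' a
      unfold Gamma at h
      split_ifs at h with h1 h2
      · rw [← h]; simp [charOf, h1 w hw]
      · rw [← h]; simp [charOf, h2 w hw]
      · exact absurd h.symm ha
    · intro a ha
      have h := hv' a
      unfold Gamma at h
      split_ifs at h with h1 h2
      · rw [ha] at h; exact absurd h (by simp)
      · rw [ha] at h; exact absurd h (by simp)
      · push_neg at h1 h2
        obtain ⟨w1, hw1, hc1⟩ := h1
        obtain ⟨w2, hw2, hc2⟩ := h2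
        exact ⟨⟨w2, hw2, by simpa [charOf] using hc2⟩,
               ⟨w1, hw1, by simpa [charOf] using hc1⟩⟩
  · rintro ⟨h1, h2⟩
    funext a
    cases hva : v a with
    | none =>
      obtain ⟨⟨w1, hw1, hc1⟩, ⟨w2, hw2, hc2⟩⟩ := h2 a hva
      unfold Gamma
      rw [if_neg, if_neg]
      · intro hall
        have hc1' : C a w1 = true := hc1
        rw [hall w1 hw1] at hc1'; exact absurd hc1' (by simp)
      · intro hall
        have hc2' : C a w2 = false := hc2
        rw [hall w2 hw2] at hc2'; exact absurd hc2' (by simp)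
    | some b =>
      have key : ∀ w, ext2 v w → C a w = b := by
        intro w hw
        have := h1 a (by simp [hva]) w hw
        simpa [charOf, hva] using this
      cases b with
      | true => unfold Gamma; rw [if_pos key]
      | false =>
        unfold Gamma
        rw [if_neg, if_pos key]
        intro hall
        have := hall _ hext
        rw [key _ hext] at this; exact absurd this (by simp)
end

section
/- If f : V₂ → V₂ is a mod-characterization of a set V of interpretations over A, then the ADF D_f satisfies mod(D_f) = V. -/
open Classical

variable {A : Type*}

theorem twoValued.exists_eq_toI {v : Interp A} (hv : twoValued v) : ∃ w, v = toI w :=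
  ⟨fun a => (v a).get (Option.isSome_iff_ne_none.2 (hv a)), funext fun a => by simp [toI]⟩

theorem ext2_toI_iff {w w' : Interp2 A} : ext2 (toI w) w' ↔ w' = w := by
  simp [ext2, toI, funext_iff, eq_comm]

/-- `toI w` is its own unique two-valued extension, so each consensus ranges over a single value. -/
theorem Gamma_toI (C : A → Interp2 A → Bool) (w : Interp2 A) :
    Gamma C (toI w) = toI (charOf C w) := by
  funext a
  cases h : C a w <;> simp [Gamma, ext2_toI_iff, toI, charOf, h]

theorem isModel_toI_iff {C : A → Interp2 A → Bool} {w : Interp2 A} :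
    isModel C (toI w) ↔ charOf C w = w := by
  simp [isModel, twoValued, toI, Gamma_toI, funext_iff]

theorem modChar_realizes_general (A : Type*)
    (f : Interp2 A → Interp2 A) (V : Set (Interp A)) (hf : modChar f V) :
    {v : Interp A | isModel (adfOf f) v} = V := by
  ext v
  constructor
  · intro hv
    obtain ⟨w, rfl⟩ := hv.1.exists_eq_toI
    exact (hf.2 w).2 (isModel_toI_iff.1 hv)
  · intro hv
    obtain ⟨w, rfl⟩ := (hf.1 v hv).exists_eq_toI
    exact isModel_toI_iff.2 ((hf.2 w).1 hv)

/-- If `f : V₂ → V₂` is a mod-characterization of `V`,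
then `mod(D_f) = V`. -/
theorem modChar_realizes (A : Type*) [Fintype A]
    (f : Interp2 A → Interp2 A) (V : Set (Interp A)) (hf : modChar f V) :
    {v : Interp A | isModel (adfOf f) v} = V :=
  modChar_realizes_general A f V hf
end

section
/- Let A = {a,b,c} and let S be the SETAF over A with attacks X = { ({a,b}, c), ({a,c}, b), ({b,c}, a) }. Then mod(S) consists of exactly the three two-valued interpretations (a↦t, b↦t, c↦f), (a↦t, b↦f, c↦t), and (a↦f, b↦t, c↦t); moreover, there is no AF (A,R) over A such that mod(D_(A,R)) equals this set of interpretations. -/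
open Classical

variable {A : Type*}

section Aux

lemma vec_eq3 (v : Interp (Fin 3)) (x y z : Option Bool) :
    v = ![x, y, z] ↔ v 0 = x ∧ v 1 = y ∧ v 2 = z := by
  constructor
  · rintro rfl; exact ⟨rfl, rfl, rfl⟩
  · rintro ⟨h0, h1, h2⟩; funext i; fin_cases i <;> simpa

lemma ext2_toI {A : Type*} (w w' : Interp2 A) : ext2 (toI w) w' ↔ w' = w := by
  constructor
  · intro h; funext a
    rcases h a with h | h <;> simp [toI] at h
    exact h.symm
  · rintro rfl a; right; rfl

lemma gamma_toI {A : Type*} (C : A → Interp2 A → Bool) (w : Interp2 A) (a : A) :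
    Gamma C (toI w) a = some (C a w) := by
  simp only [Gamma, ext2_toI, forall_eq]
  cases h : C a w <;> simp [h]

lemma isModel_toI {A : Type*} (C : A → Interp2 A → Bool) (w : Interp2 A) :
    isModel C (toI w) ↔ ∀ a, C a w = w a := by
  constructor
  · rintro ⟨-, hg⟩ a
    have := congrFun hg a
    rw [gamma_toI] at this
    simpa [toI] using this
  · intro h
    refine ⟨fun a => by simp [toI], funext fun a => ?_⟩
    rw [gamma_toI, h a]; rfl

lemma toI_vec (x y z : Bool) : toI ![x, y, z] = ![some x, some y, some z] := by
  funext i; fin_cases i <;> rfl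

end Aux

/-- Over `A = {a,b,c}` (as `Fin 3`), the SETAF with attacks
`{({a,b},c), ({a,c},b), ({b,c},a)}` has exactly the three two-valued models
`ttf`, `tft`, `ftt`, and no AF over `A` has exactly these two-valued models. -/

theorem setaf_three_cycle_not_af_realizable :
    {v : Interp (Fin 3) |
        modS ({({0, 1}, 2), ({0, 2}, 1), ({1, 2}, 0)} : Set (Set (Fin 3) × Fin 3)) v} =
      ({![some true, some true, some false],
        ![some true, some false, some true],
        ![some false, some true, some true]} : Set (Interp (Fin 3))) ∧
    ¬ ∃ R : Set (Fin 3 × Fin 3),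
        {v : Interp (Fin 3) | isModel (afADF R) v} =
          ({![some true, some true, some false],
            ![some true, some false, some true],
            ![some false, some true, some true]} : Set (Interp (Fin 3))) := by
  set X : Set (Set (Fin 3) × Fin 3) := {({0, 1}, 2), ({0, 2}, 1), ({1, 2}, 0)} with hX
  have acc0 : ∀ v : Interp (Fin 3), acceptable X v 0 ↔
      (v 1 = some false ∨ v 2 = some false) := by
    intro v
    simp [acceptable, hX, Set.mem_insert_iff, Prod.mk.injEq]
  have acc1 : ∀ v : Interp (Fin 3), acceptable X v 1 ↔
      (v 0 = some false ∨ v 2 = some false) := by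
    intro v
    simp [acceptable, hX, Set.mem_insert_iff, Prod.mk.injEq]
  have acc2 : ∀ v : Interp (Fin 3), acceptable X v 2 ↔
      (v 0 = some false ∨ v 1 = some false) := by
    intro v
    simp [acceptable, hX, Set.mem_insert_iff, Prod.mk.injEq]
  have un0 : ∀ v : Interp (Fin 3), unacceptable X v 0 ↔
      (v 1 = some true ∧ v 2 = some true) := by
    intro v
    simp [unacceptable, hX, Set.mem_insert_iff, Prod.mk.injEq]
  have un1 : ∀ v : Interp (Fin 3), unacceptable X v 1 ↔
      (v 0 = some true ∧ v 2 = some true) := by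
    intro v
    simp [unacceptable, hX, Set.mem_insert_iff, Prod.mk.injEq]
  have un2 : ∀ v : Interp (Fin 3), unacceptable X v 2 ↔
      (v 0 = some true ∧ v 1 = some true) := by
    intro v
    simp [unacceptable, hX, Set.mem_insert_iff, Prod.mk.injEq]
  constructor
  · ext v
    simp only [Set.mem_setOf_eq, Set.mem_insert_iff, Set.mem_singleton_iff, vec_eq3]
    constructor
    · rintro ⟨hadm, h2v⟩
      have e0 := h2v 0; have e1 := h2v 1; have e2 := h2v 2
      rcases k0 : v 0 with - | b0; · exact absurd k0 e0
      rcases k1 : v 1 with - | b1; · exact absurd k1 e1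
      rcases k2 : v 2 with - | b2; · exact absurd k2 e2
      have h0 := hadm 0; have h1 := hadm 1; have h2 := hadm 2
      rw [acc0, un0] at h0; rw [acc1, un1] at h1; rw [acc2, un2] at h2
      cases b0 <;> cases b1 <;> cases b2 <;> simp_all
    · rintro (⟨k0, k1, k2⟩ | ⟨k0, k1, k2⟩ | ⟨k0, k1, k2⟩) <;>
      · constructor
        · intro a
          rw [show (acceptable X v a ↔ acceptable X v a ∧ True) by simp] at *
          fin_cases a <;>
            simp [acc0, acc1, acc2, un0, un1, un2, k0, k1, k2]
        · intro a
          fin_cases a <;> simp [k0, k1, k2]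
  · rintro ⟨R, hR⟩
    have hmem : ∀ w : Interp2 (Fin 3),
        toI w ∈ ({![some true, some true, some false],
          ![some true, some false, some true],
          ![some false, some true, some true]} : Set (Interp (Fin 3))) →
        ∀ a, afADF R a w = w a := by
      intro w hw
      have : toI w ∈ {v : Interp (Fin 3) | isModel (afADF R) v} := by rw [hR]; exact hw
      exact (isModel_toI _ _).mp this
    have m1 := hmem ![true, true, false] (by rw [toI_vec]; simp) 0
    have m2 := hmem ![true, false, true] (by rw [toI_vec]; simp) 0
    have m3 := hmem ![false, true, true] (by rw [toI_vec]; simp) 0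
    simp only [afADF] at m1 m2 m3
    have n1 : (1, (0 : Fin 3)) ∉ R := by
      intro hmem1
      by_cases hP : ∀ b, (b, (0 : Fin 3)) ∈ R → ![true, true, false] b = false
      · simpa using hP 1 hmem1
      · simp [hP] at m1
    have n2 : (2, (0 : Fin 3)) ∉ R := by
      intro hmem2
      by_cases hP : ∀ b, (b, (0 : Fin 3)) ∈ R → ![true, false, true] b = false
      · simpa using hP 2 hmem2
      · simp [hP] at m2
    by_cases hP : ∀ b, (b, (0 : Fin 3)) ∈ R → ![false, true, true] b = false
    · rw [if_pos hP] at m3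
      simp at m3
    · push_neg at hP
      obtain ⟨b, hb, hbv⟩ := hP
      fin_cases b
      · simp at hbv
      · exact n1 hb
      · exact n2 hb
end

section
/- Let A = {a} be a singleton vocabulary. The ADF D over A with constant-false acceptance condition C_a(w) = f for all w is bipolar and satisfies com(D) = {v_f}, where v_f(a) = f. However, there is no SETAF S over A with com(S) = {v_f}. Hence the complete-semantics signature of BADFs strictly exceeds that of SETAFs. -/
open Classical

variable {A : Type*}

section Proof16

lemma unit_funext' {α : Sort _} {f g : Unit → α} (h : f () = g ()) : f = g :=
  funext fun u => by cases u; exact h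

lemma exists_ext2' {A : Type*} (v : Interp A) : ∃ w : Interp2 A, ext2 v w := by
  refine ⟨fun a => (v a).getD true, fun a => ?_⟩
  cases h : v a with
  | none => exact Or.inl rfl
  | some b => exact Or.inr (by simp [h])

lemma gamma_const_false (v : Interp Unit) :
    Gamma (fun _ _ => false) v = fun _ => some false := by
  funext a
  have h1 : ¬ ∀ w, ext2 v w → (fun (_ : Unit) (_ : Interp2 Unit) => false) a w = true := by
    intro h
    obtain ⟨w, hw⟩ := exists_ext2' v
    simpa using h w hw
  have h2 : ∀ w, ext2 v w → (fun (_ : Unit) (_ : Interp2 Unit) => false) a w = false :=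
    fun w _ => rfl
  unfold Gamma
  rw [if_neg h1, if_pos h2]

lemma const_false_com (v : Interp Unit) :
    complete (fun _ _ => false) v ↔ v = fun _ => some false := by
  unfold complete
  rw [gamma_const_false v]
  exact eq_comm

lemma setaf_cond (X : Set (Set Unit × Unit)) (hne : ∀ p ∈ X, p.1.Nonempty)
    (w : Interp2 Unit) :
    setafADF X () w = true ↔ (¬ (∃ B, (B, ()) ∈ X) ∨ w () = false) := by
  have hdef : setafADF X () w = true ↔ ∀ B, (B, ()) ∈ X → ∃ b ∈ B, w b = false := by
    unfold setafADF
    split_ifs with h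
    · exact iff_of_true rfl h
    · exact iff_of_false (by simp) h
  rw [hdef]
  constructor
  · intro h
    by_cases hQ : ∃ B, (B, ()) ∈ X
    · obtain ⟨B, hB⟩ := hQ
      obtain ⟨b, hb, hbf⟩ := h B hB
      exact Or.inr (by cases b; exact hbf)
    · exact Or.inl hQ
  · rintro (hQ | hw) B hB
    · exact absurd ⟨B, hB⟩ hQ
    · obtain ⟨b, hb⟩ := hne (B, ()) hB
      exact ⟨b, hb, by cases b; exact hw⟩

lemma complete_setaf_iff (X : Set (Set Unit × Unit)) (hne : ∀ p ∈ X, p.1.Nonempty)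
    (v : Interp Unit) :
    complete (setafADF X) v ↔
      (if ∃ B, (B, ()) ∈ X then v () = none else v () = some true) := by
  have hiff : complete (setafADF X) v ↔ Gamma (setafADF X) v () = v () :=
    ⟨fun h => congrFun h (), fun h => unit_funext' h⟩
  rw [hiff]
  by_cases hQ : ∃ B, (B, ()) ∈ X
  · rw [if_pos hQ]
    cases hv : v () with
    | none =>
      have hall : ∀ w : Interp2 Unit, ext2 v w := fun w a => by cases a; exact Or.inl hv
      have h1 : ¬ ∀ w, ext2 v w → setafADF X () w = true := by
        intro h
        have := (setaf_cond X hne (fun _ => true)).mp (h _ (hall _))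
        simp [hQ] at this
      have h2 : ¬ ∀ w, ext2 v w → setafADF X () w = false := by
        intro h
        have ht := (setaf_cond X hne (fun _ => false)).mpr (Or.inr rfl)
        have := h (fun _ => false) (hall _)
        rw [this] at ht
        exact absurd ht (by simp)
      simp only [Gamma, if_neg h1, if_neg h2, hv]
    | some b =>
      cases b
      · have h1 : ∀ w : Interp2 Unit, ext2 v w → setafADF X () w = true := by
          intro w hw
          rcases hw () with h | h
          · rw [hv] at h; exact absurd h (by simp)
          · rw [hv] at h
            exact (setaf_cond X hne w).mpr (Or.inr (by simpa using h.symm))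
        simp only [Gamma, if_pos h1, hv]
        simp
      · have h1 : ¬ ∀ w, ext2 v w → setafADF X () w = true := by
          intro h
          have hext : ext2 v (fun _ => true) := fun a => by
            cases a; exact Or.inr (by simp [hv])
          have := (setaf_cond X hne (fun _ => true)).mp (h _ hext)
          simp [hQ] at this
        have h2 : ∀ w : Interp2 Unit, ext2 v w → setafADF X () w = false := by
          intro w hw
          rcases hw () with h | h
          · rw [hv] at h; exact absurd h (by simp)
          · rw [hv] at h
            have hwt : w () = true := by simpa using h.symm
            rw [Bool.eq_false_iff]
            intro hc
            rcases (setaf_cond X hne w).mp hc with h' | h'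
            · exact h' hQ
            · rw [hwt] at h'; exact absurd h' (by simp)
        simp only [Gamma, if_neg h1, if_pos h2, hv]
        simp
  · rw [if_neg hQ]
    have h1 : ∀ w : Interp2 Unit, ext2 v w → setafADF X () w = true := fun w _ =>
      (setaf_cond X hne w).mpr (Or.inl hQ)
    simp only [Gamma, if_pos h1]
    exact eq_comm

lemma comS_iff (X : Set (Set Unit × Unit)) (hne : ∀ p ∈ X, p.1.Nonempty)
    (v : Interp Unit) :
    comS X v ↔
      (if ∃ B, (B, ()) ∈ X then v () = none else v () = some true) := by
  have acc : acceptable X v () ↔ (¬ (∃ B, (B, ()) ∈ X) ∨ v () = some false) := by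
    constructor
    · intro h
      by_cases hQ : ∃ B, (B, ()) ∈ X
      · obtain ⟨B, hB⟩ := hQ
        obtain ⟨b, hb, hbf⟩ := h B hB
        exact Or.inr (by cases b; exact hbf)
      · exact Or.inl hQ
    · rintro (hQ | hv) B hB
      · exact absurd ⟨B, hB⟩ hQ
      · obtain ⟨b, hb⟩ := hne (B, ()) hB
        exact ⟨b, hb, by cases b; exact hv⟩
  have unacc : unacceptable X v () ↔ ((∃ B, (B, ()) ∈ X) ∧ v () = some true) := by
    constructor
    · rintro ⟨B, hB, hall⟩
      obtain ⟨b, hb⟩ := hne (B, ()) hB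
      refine ⟨⟨B, hB⟩, ?_⟩
      have := hall b hb
      cases b; exact this
    · rintro ⟨⟨B, hB⟩, hv⟩
      exact ⟨B, hB, fun b _ => by cases b; exact hv⟩
  have hcom : comS X v ↔
      ((v () = some true ↔ acceptable X v ()) ∧ (v () = some false ↔ unacceptable X v ())) :=
    ⟨fun h => h (), fun h a => by cases a; exact h⟩
  rw [hcom]
  rw [acc, unacc]
  by_cases hQ : ∃ B, (B, ()) ∈ X
  · rw [if_pos hQ]
    simp only [hQ, not_true, false_or, true_and]
    constructor
    · rintro ⟨h1, h2⟩
      cases hv : v () with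
      | none => rfl
      | some b =>
        cases b
        · have := h2.mp hv; rw [hv] at this; exact absurd this (by simp)
        · have := h1.mp hv; rw [hv] at this; exact absurd this (by simp)
    · intro hv
      rw [hv]
      simp
  · rw [if_neg hQ]
    simp only [hQ, not_false_eq_true, true_or, iff_true, false_and, iff_false]
    constructor
    · exact fun h => h.1
    · intro h
      exact ⟨h, by rw [h]; simp⟩

lemma no_setaf_vf :
    ¬ ∃ X : Set (Set Unit × Unit), (∀ p ∈ X, p.1.Nonempty) ∧
        {v : Interp Unit | comS X v} = {(fun _ => some false : Interp Unit)} := by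
  rintro ⟨X, hne, hX⟩
  have hmem : comS X (fun _ => some false) := by
    have : (fun _ => some false : Interp Unit) ∈ {v : Interp Unit | comS X v} := by
      rw [hX]; rfl
    exact this
  have := (comS_iff X hne _).mp hmem
  by_cases hQ : ∃ B, (B, ()) ∈ X
  · rw [if_pos hQ] at this; exact absurd this (by simp)
  · rw [if_neg hQ] at this; exact absurd this (by simp)

end Proof16

/-- Over the singleton vocabulary `A = {a}` (as `Unit`), the ADF
with constant-false acceptance condition is bipolar and has `com(D) = {v_f}`,
but no SETAF over `A` has `{v_f}` as its complete semantics. Hence the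
complete-semantics signature of BADFs strictly exceeds that of SETAFs. -/
theorem badf_strictly_more_expressive_than_setaf_com :
    bipolar (fun (_ : Unit) (_ : Interp2 Unit) => false) ∧
    {v : Interp Unit | complete (fun _ _ => false) v} =
      {(fun _ => some false : Interp Unit)} ∧
    (¬ ∃ X : Set (Set Unit × Unit), (∀ p ∈ X, p.1.Nonempty) ∧
        {v : Interp Unit | comS X v} = {(fun _ => some false : Interp Unit)}) ∧
    ((∀ V : Set (Interp Unit),
        (∃ X : Set (Set Unit × Unit), (∀ p ∈ X, p.1.Nonempty) ∧
          {v : Interp Unit | comS X v} = V) →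
        (∃ C : Unit → Interp2 Unit → Bool, bipolar C ∧
          {v : Interp Unit | complete C v} = V)) ∧
     (∃ V : Set (Interp Unit),
        (∃ C : Unit → Interp2 Unit → Bool, bipolar C ∧
          {v : Interp Unit | complete C v} = V) ∧
        ¬ ∃ X : Set (Set Unit × Unit), (∀ p ∈ X, p.1.Nonempty) ∧
          {v : Interp Unit | comS X v} = V)) := by
  have hbip : bipolar (fun (_ : Unit) (_ : Interp2 Unit) => false) := by
    intro a b
    right
    intro w _ h
    exact absurd h (by simp)
  have hset : {v : Interp Unit | complete (fun _ _ => false) v} =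
      {(fun _ => some false : Interp Unit)} := by
    ext v
    simp only [Set.mem_setOf_eq, Set.mem_singleton_iff]
    exact const_false_com v
  refine ⟨hbip, hset, no_setaf_vf, ?_, ?_⟩
  · rintro V ⟨X, hne, hV⟩
    refine ⟨setafADF X, ?_, ?_⟩
    · intro a b
      right
      intro w hwb hupd
      rcases (setaf_cond X hne _).mp hupd with hQ | hf
      · exact (setaf_cond X hne w).mpr (Or.inl hQ)
      · cases b
        exact absurd hf (by simp)
    · rw [← hV]
      ext v
      simp only [Set.mem_setOf_eq]
      exact (complete_setaf_iff X hne v).trans (comS_iff X hne v).symm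
  · exact ⟨{(fun _ => some false : Interp Unit)},
      ⟨fun _ _ => false, hbip, hset⟩, no_setaf_vf⟩
end

section
/- Let V be a nonempty set of two-valued interpretations over A. If there is an ADF D over A with mod(D) = V, then there is an ADF D' over A with prf(D') = V. In other words, every nonempty element of the two-valued-model signature of ADFs belongs to the preferred signature of ADFs. -/
open Classical

variable {A : Type*}

/-- Every nonempty set of two-valued interpretations realizable
under the two-valued model semantics by some ADF over `A` is also realizable
under the preferred semantics by some ADF over `A`. -/
theorem mod_signature_subset_prf_signature (A : Type*) [Fintype A]
    (V : Set (Interp A)) (hne : V.Nonempty) (h2 : ∀ v ∈ V, twoValued v)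
    (hmod : ∃ C : A → Interp2 A → Bool, {v : Interp A | isModel C v} = V) :
    ∃ C' : A → Interp2 A → Bool, {v : Interp A | preferred C' v} = V := by
  classical
  obtain ⟨v0, hv0⟩ := hne
  have hv0tv := h2 v0 hv0
  set g : Interp2 A := fun a => (v0 a).getD true with hg
  have hgv0 : toI g = v0 := by
    funext a
    cases h : v0 a with
    | none => exact absurd h (hv0tv a)
    | some b => simp [toI, hg, h]
  -- the constructed ADF
  set C : A → Interp2 A → Bool :=
    fun a w => if toI w ∈ V then w a else g a with hC
  -- every interpretation has a two-valued extension
  have hext : ∀ v : Interp A, ∃ w : Interp2 A, ext2 v w := by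
    intro v
    refine ⟨fun a => (v a).getD true, fun a => ?_⟩
    cases h : v a with
    | none => exact Or.inl rfl
    | some b => exact Or.inr (by simp [h])
  -- characterization of admissibility
  have adm_iff : ∀ v : Interp A, admissible C v ↔
      ∀ a b, v a = some b → ∀ w, ext2 v w → C a w = b := by
    intro v
    constructor
    · intro hadm a b hab w hw
      rcases hadm a with h | h
      · rw [hab] at h; exact absurd h (by simp)
      · rw [hab] at h
        unfold Gamma at h
        split_ifs at h with h1 h2
        · obtain rfl : b = true := Option.some.inj h
          exact h1 w hw
        · obtain rfl : b = false := Option.some.inj h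
          exact h2 w hw
    · intro hyp a
      cases hab : v a with
      | none => exact Or.inl rfl
      | some b =>
        right
        unfold Gamma
        cases b with
        | true =>
          rw [if_pos (fun w hw => hyp a true hab w hw)]
        | false =>
          obtain ⟨w0, hw0⟩ := hext v
          have h1 : ¬ ∀ w, ext2 v w → C a w = true := by
            intro hall
            have := hall w0 hw0
            rw [hyp a false hab w0 hw0] at this
            exact Bool.false_ne_true this
          rw [if_neg h1, if_pos (fun w hw => hyp a false hab w hw)]
  -- ext2 for two-valued v means toI w = v, in particular elements of V are admissible
  have admV : ∀ v ∈ V, admissible C v := by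
    intro v hv
    rw [adm_iff]
    intro a b hab w hw
    have htoI : toI w = v := by
      funext x
      rcases hw x with h | h
      · exact absurd h (h2 v hv x)
      · exact h.symm
    have : C a w = w a := by rw [hC]; simp [htoI, hv]
    rw [this]
    have := hw a
    rcases this with h | h
    · exact absurd h (h2 v hv a)
    · rw [hab] at h; exact (Option.some_injective _ h).symm
  -- two-valued interpretations have nothing strictly above
  have tv_max : ∀ v : Interp A, twoValued v → ∀ w, ¬ ltI v w := by
    intro v htv w ⟨hle, hne'⟩
    apply hne'
    funext a
    rcases hle a with h | h
    · exact absurd h (htv a)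
    · exact h
  -- ext2 v w gives leI v (toI w)
  have ext_le : ∀ (v : Interp A) (w : Interp2 A), ext2 v w → leI v (toI w) := by
    intro v w hw a
    rcases hw a with h | h
    · exact Or.inl h
    · exact Or.inr h
  -- dichotomy: every admissible v is in V or strictly below an admissible interp
  have dich : ∀ v : Interp A, admissible C v →
      v ∈ V ∨ ∃ w, admissible C w ∧ ltI v w := by
    intro v hadm
    by_cases hall : ∀ w : Interp2 A, ext2 v w → toI w ∈ V
    · obtain ⟨w0, hw0⟩ := hext v
      have hw0V := hall w0 hw0
      by_cases heq : v = toI w0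
      · exact Or.inl (heq ▸ hw0V)
      · exact Or.inr ⟨toI w0, admV _ hw0V, ext_le v w0 hw0, heq⟩
    · push_neg at hall
      obtain ⟨w0, hw0, hw0V⟩ := hall
      have hle : leI v (toI g) := by
        intro a
        cases hab : v a with
        | none => exact Or.inl rfl
        | some b =>
          right
          have := (adm_iff v).mp hadm a b hab w0 hw0
          rw [hC] at this
          simp only [if_neg hw0V] at this
          rw [← this]
          rfl
      by_cases heq : v = toI g
      · exact Or.inl (heq ▸ hgv0 ▸ hv0)
      · exact Or.inr ⟨toI g, hgv0 ▸ admV v0 hv0, hle, heq⟩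
  refine ⟨C, ?_⟩
  ext v
  simp only [Set.mem_setOf_eq]
  constructor
  · rintro ⟨hadm, hmax⟩
    rcases dich v hadm with h | h
    · exact h
    · exact absurd h hmax
  · intro hv
    refine ⟨admV v hv, ?_⟩
    rintro ⟨w, _, hlt⟩
    exact tv_max v (h2 v hv) w hlt
end

section
/- Let V be a nonempty set of two-valued interpretations over A and let f : V₂ → V₂ be a mod-characterization of V. Define f' : V₂ → V₂ by f'(v) = v for v ∈ V and f'(v)(a) = ¬v(a) for all a ∈ A whenever v ∉ V. Then f' is an adm-characterization of the set V' = { v | every v₂ ∈ [v]₂ belongs to V } ∪ {v_u}, and the ≤_i-maximal elements of V' are exactly V. -/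
open Classical

variable {A : Type*}

/-- The function `f'` built from a mod-characterization `f` of `V`:
it fixes the elements of `V` and flips all truth values elsewhere. -/
noncomputable def fPrime (V : Set (Interp A)) (f : Interp2 A → Interp2 A) :
    Interp2 A → Interp2 A :=
  fun w => if toI w ∈ V then w else fun a => !(w a)

/-- If `f` is a mod-characterization of a nonempty set `V` of
two-valued interpretations, then `f'` is an adm-characterization of
`V' = { v | every two-valued extension of v is in V } ∪ {v_u}`, and the
`≤ᵢ`-maximal elements of `V'` are exactly `V`. -/
theorem fPrime_admChar (A : Type*) [Fintype A] (V : Set (Interp A))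
    (hne : V.Nonempty) (f : Interp2 A → Interp2 A) (hf : modChar f V) :
    admChar (fPrime V f)
      ({v : Interp A | ∀ w : Interp2 A, ext2 v w → toI w ∈ V} ∪
        {(fun _ => none : Interp A)}) ∧
    maximals
      ({v : Interp A | ∀ w : Interp2 A, ext2 v w → toI w ∈ V} ∪
        {(fun _ => none : Interp A)}) = V := by
  obtain ⟨htv, hfix⟩ := hf
  have hVsub : ∀ u ∈ V, ∀ w : Interp2 A, ext2 u w → toI w ∈ V := by
    intro u hu w hw
    have : toI w = u := by
      funext a
      rcases hw a with h | h
      · exact absurd h (htv u hu a)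
      · exact h.symm
    rw [this]; exact hu
  have hext : ∀ v : Interp A, ext2 v (fun a => (v a).getD true) := by
    intro v a
    cases h : v a with
    | none => exact Or.inl rfl
    | some b => exact Or.inr (by simp [h])
  constructor
  · intro v
    constructor
    · rintro (hv | hv)
      · intro a ha w hw
        have hwV := hv w hw
        have h2 : v a = some (w a) := (hw a).resolve_left ha
        rw [fPrime, if_pos hwV, h2]
      · intro a ha
        exact absurd (congrFun hv a) ha
    · intro h
      by_cases hvu : v = (fun _ => none : Interp A)
      · exact Or.inr hvu
      · left
        intro w hw
        by_contra hwV
        have : ∃ a, v a ≠ none := by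
          by_contra hall
          push_neg at hall
          exact hvu (funext hall)
        obtain ⟨a, ha⟩ := this
        have h1 := h a ha w hw
        have h2 : v a = some (w a) := (hw a).resolve_left ha
        rw [fPrime, if_neg hwV, h2] at h1
        simp at h1
  · ext v
    constructor
    · rintro ⟨hv, hmax⟩
      rcases hv with hv | hv
      · by_cases htv2 : twoValued v
        · have hin := hv _ (hext v)
          have hv_eq : v = toI (fun a => (v a).getD true) := by
            funext a
            cases h : v a with
            | none => exact absurd h (htv2 a)
            | some b => simp [toI, h]
          rw [hv_eq]; exact hin
        · exfalso
          simp only [twoValued, not_forall, not_not] at htv2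
          obtain ⟨a₀, ha₀⟩ := htv2
          have hin : toI (fun a => (v a).getD true) ∈ V := hv _ (hext v)
          apply hmax
          refine ⟨toI (fun a => (v a).getD true), Or.inl (hVsub _ hin), ?_, ?_⟩
          · intro a
            rcases hext v a with h | h
            · exact Or.inl h
            · exact Or.inr h
          · intro heq
            have := congrFun heq a₀
            rw [ha₀] at this
            simp [toI] at this
      · by_contra hvV
        obtain ⟨v0, hv0⟩ := hne
        apply hmax
        refine ⟨v0, Or.inl (hVsub v0 hv0), ?_, ?_⟩
        · intro a
          exact Or.inl (congrFun hv a)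
        · intro heq
          rw [heq] at hvV
          exact hvV hv0
    · intro hv
      refine ⟨Or.inl (hVsub v hv), ?_⟩
      rintro ⟨w, _, hle, hneq⟩
      apply hneq
      funext a
      exact (hle a).resolve_left (htv v hv a)
end
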